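/- arXiv:2311.10480 — 2 statements merged into one kernel-verified Lean document; each statement's English description precedes it below -/
import Mathlib

section
/- If a signed graph G is clusterable, then G contains no bad cycle; that is, G has no cycle containing exactly one negative edge. -/
/- A signed graph is a simple graph `G` together with a sign function on (potential) edges;
`sign e = true` means the edge is positive, `sign e = false` means it is negative. -/

/-- The positive subgraph: the spanning subgraph on the same vertex set whose edges are the
positive edges of `G`. -/
def posSubgraph {V : Type} (G : SimpleGraph V) (sign : Sym2 V → Bool) : SimpleGraph V where
  Adj u v := G.Adj u v ∧ sign s(u, v) = true
  symm := ⟨fun u v ⟨h, hs⟩ => ⟨h.symm, by rwa [Sym2.eq_swap]⟩⟩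
  loopless := ⟨fun v ⟨h, _⟩ => G.irrefl h⟩

/-- A signed graph is clusterable if there is a map `c` from the vertices to some set of
clusters such that every edge inside a cluster is positive and every edge between two
different clusters is negative. -/
def Clusterable {V : Type} (G : SimpleGraph V) (sign : Sym2 V → Bool) : Prop :=
  ∃ (K : Type) (c : V → K), ∀ u v : V, G.Adj u v → (c u = c v ↔ sign s(u, v) = true)

/-- A bad cycle: a cycle of `G` containing exactly one negative edge. -/
def HasBadCycle {V : Type} (G : SimpleGraph V) (sign : Sym2 V → Bool) : Prop :=
  ∃ (v : V) (w : G.Walk v v), w.IsCycle ∧ (w.edges.filter fun e => sign e = false).length = 1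

/-- If a signed graph is clusterable, then it contains no bad cycle. -/
theorem clusterable_imp_no_bad_cycle {V : Type} [Fintype V]
    (G : SimpleGraph V) (sign : Sym2 V → Bool)
    (h : Clusterable G sign) : ¬ HasBadCycle G sign := by
  rintro ⟨v, w, _, hlen⟩
  obtain ⟨K, c, hK⟩ := h
  suffices H : ∀ {a b : V} (p : G.Walk a b),
      ((p.edges.filter fun e => sign e = false).length = 0 → c a = c b) ∧
      ((p.edges.filter fun e => sign e = false).length = 1 → c a ≠ c b) from
    (H w).2 hlen rfl
  intro a b p
  induction p with
  | nil => simp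
  | @cons x y z hadj q ih =>
    simp only [SimpleGraph.Walk.edges_cons]
    by_cases hs : sign s(x, y) = false
    · have hne : c x ≠ c y := fun hcc => by
        have := (hK x y hadj).mp hcc
        rw [hs] at this
        exact Bool.false_ne_true this
      rw [List.filter_cons_of_pos (by simp [hs])]
      simp only [List.length_cons]
      constructor
      · omega
      · intro hl hcc
        have : (q.edges.filter fun e => decide (sign e = false)).length = 0 := by omega
        exact hne (hcc.trans (ih.1 this).symm)
    · have hpos : sign s(x, y) = true := by
        cases hb : sign s(x, y) with
        | false => exact absurd hb hs
        | true => rfl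
      have heq : c x = c y := (hK x y hadj).mpr hpos
      rw [List.filter_cons_of_neg (by simp [hs])]
      constructor
      · intro hl; exact heq.trans (ih.1 hl)
      · intro hl hcc; exact ih.2 hl (heq.symm.trans hcc)
end

section
/- For all natural numbers N and x with x ≤ 0.06·N, the following inequality holds: ∑_{i=2}^{x} C(N, i) · (1/2)^{N−i} < 2^{N·(−1 + 0.06 + H(0.06))}, where C(N, i) denotes the binomial coefficient. -/
open Finset

/-- The binary entropy function `H(p) = -p log₂ p - (1-p) log₂ (1-p)`. -/
noncomputable def binH (p : ℝ) : ℝ := -p * Real.logb 2 p - (1 - p) * Real.logb 2 (1 - p)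

/-- For all naturals `N`, `x` with `x ≤ 0.06 N`,
`∑_{i=2}^{x} C(N,i) (1/2)^{N-i} < 2^{N(-1+0.06+H(0.06))}`. -/
theorem binom_sum_lt (N x : ℕ) (hx : (x : ℝ) ≤ 0.06 * N) :
    ∑ i ∈ Finset.Icc 2 x, (N.choose i : ℝ) * (1 / 2) ^ (N - i)
      < (2 : ℝ) ^ ((N : ℝ) * (-1 + 0.06 + binH 0.06)) := by
  rcases lt_or_ge x 2 with h2 | h2
  · rw [Finset.Icc_eq_empty (by omega : ¬ (2:ℕ) ≤ x), Finset.sum_empty]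
    positivity
  -- x ≤ N
  have hxN : x ≤ N := by
    have hN : (x : ℝ) ≤ (N : ℝ) := le_trans hx (by nlinarith [(Nat.cast_nonneg N : (0:ℝ) ≤ N)])
    exact_mod_cast hN
  set T : ℝ := 3/47 with hT
  have hTpos : (0:ℝ) < T := by norm_num [hT]
  -- Step 1: termwise bound
  have step1 : ∑ i ∈ Finset.Icc 2 x, (N.choose i : ℝ) * (1 / 2) ^ (N - i)
      ≤ ((2/T)^x * (1/2)^N) * ∑ i ∈ Finset.Icc 2 x, (N.choose i : ℝ) * T ^ i := by
    rw [Finset.mul_sum]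
    apply Finset.sum_le_sum
    intro i hi
    have hix : i ≤ x := (Finset.mem_Icc.mp hi).2
    have hiN : i ≤ N := le_trans hix hxN
    have hpow : ((1:ℝ)/2) ^ (N - i) = (1/2)^N * 2^i := by
      rw [pow_sub₀ _ (by norm_num) hiN]
      congr 1
      rw [one_div, inv_pow, inv_inv]
    rw [hpow]
    have h2i : (2:ℝ)^i ≤ (2/T)^x * T^i := by
      have he : (2:ℝ)^i = (2/T)^i * T^i := by
        rw [← mul_pow, div_mul_cancel₀ _ (ne_of_gt hTpos)]
      rw [he]
      have : ((2:ℝ)/T)^i ≤ (2/T)^x := by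
        apply pow_le_pow_right₀ (by norm_num [hT]) hix
      exact mul_le_mul_of_nonneg_right this (by positivity)
    calc (N.choose i : ℝ) * ((1/2)^N * 2^i)
        ≤ (N.choose i : ℝ) * ((1/2)^N * ((2/T)^x * T^i)) := by
          apply mul_le_mul_of_nonneg_left _ (by positivity)
          exact mul_le_mul_of_nonneg_left h2i (by positivity)
      _ = (2/T)^x * (1/2)^N * ((N.choose i : ℝ) * T^i) := by ring
  -- Step 2: strict bound by binomial theorem
  have step2 : ∑ i ∈ Finset.Icc 2 x, (N.choose i : ℝ) * T ^ i < (1 + T)^N := by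
    have hbin : ((1:ℝ) + T)^N = ∑ i ∈ Finset.range (N+1), (N.choose i : ℝ) * T ^ i := by
      rw [add_comm, add_pow]
      apply Finset.sum_congr rfl
      intro i _
      rw [one_pow]; ring
    rw [hbin]
    refine Finset.sum_lt_sum_of_subset ?_ (i := 0) ?_ ?_ ?_ ?_
    · intro i hi
      rw [Finset.mem_range]
      have := (Finset.mem_Icc.mp hi).2
      omega
    · exact Finset.mem_range.mpr (Nat.succ_pos N)
    · simp
    · simp
    · intro j _ _; positivity
  have hApos : (0:ℝ) < (2/T)^x * (1/2)^N := by positivity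
  have hmain : ∑ i ∈ Finset.Icc 2 x, (N.choose i : ℝ) * (1 / 2) ^ (N - i)
      < ((2/T)^x * (1/2)^N) * (1 + T)^N :=
    lt_of_le_of_lt step1 (by exact (mul_lt_mul_iff_right₀ hApos).mpr step2)
  refine lt_of_lt_of_le hmain ?_
  -- Step 3: rewrite as rpow and compare exponents
  set A : ℝ := ((2/T)^x * (1/2)^N) * (1 + T)^N with hA
  have hApos' : (0:ℝ) < A := by positivity
  rw [show A = (2:ℝ) ^ (Real.logb 2 A) from (Real.rpow_logb two_pos (by norm_num) hApos').symm]
  rw [Real.rpow_le_rpow_left_iff (by norm_num : (1:ℝ) < 2)]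
  -- compute logb 2 A
  have hlogA : Real.logb 2 A
      = (x:ℝ) * Real.logb 2 (2/T) + (N:ℝ) * Real.logb 2 (1/2) + (N:ℝ) * Real.logb 2 (1+T) := by
    rw [hA, Real.logb_mul (by positivity) (by positivity),
        Real.logb_mul (by positivity) (by positivity),
        Real.logb_pow, Real.logb_pow, Real.logb_pow]
  rw [hlogA]
  -- numeric logb values
  have L1 : Real.logb 2 (2/T) = 1 + Real.logb 2 47 - Real.logb 2 3 := by
    rw [hT, show (2:ℝ)/(3/47) = (2*47)/3 by norm_num,
        Real.logb_div (by norm_num) (by norm_num),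
        Real.logb_mul (by norm_num) (by norm_num),
        Real.logb_self_eq_one (by norm_num)]
  have L2 : Real.logb 2 ((1:ℝ)/2) = -1 := by
    rw [show (1:ℝ)/2 = 2⁻¹ by norm_num, Real.logb_inv, Real.logb_self_eq_one (by norm_num)]
  have L3 : Real.logb 2 (1+T) = Real.logb 2 50 - Real.logb 2 47 := by
    rw [hT, show (1:ℝ)+3/47 = 50/47 by norm_num, Real.logb_div (by norm_num) (by norm_num)]
  have L4 : Real.logb 2 (0.06:ℝ) = Real.logb 2 3 - Real.logb 2 50 := by
    rw [show (0.06:ℝ) = 3/50 by norm_num, Real.logb_div (by norm_num) (by norm_num)]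
  have L5 : Real.logb 2 ((1:ℝ)-0.06) = Real.logb 2 47 - Real.logb 2 50 := by
    rw [show (1:ℝ)-0.06 = 47/50 by norm_num, Real.logb_div (by norm_num) (by norm_num)]
  rw [L1, L2, L3, binH, L4, L5]
  have hmono : Real.logb 2 3 ≤ Real.logb 2 47 := by
    gcongr <;> norm_num
  nlinarith [mul_nonneg (sub_nonneg.2 hx) (by linarith : (0:ℝ) ≤ 1 + Real.logb 2 47 - Real.logb 2 3)]
end
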